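/- Let k be a field, let p, q ∈ k[x] be monic polynomials of respective degrees n and n−1, and set H = H_n(q/p) ∈ k^{n×n}. Then: (a) the matrix C_p^T·H is symmetric; (b) det(H)·p(x) = det(x·H − C_p^T·H) in k[x]; and (c) if H = K·D·K^T where K ∈ k^{n×n} is lower triangular with all diagonal entries equal to 1 and D ∈ k^{n×n} is diagonal, then the matrix Td = K^{−1}·C_p^T·K·D is symmetric and tridiagonal and det(D)·p(x) = det(x·D − Td). -/

import Mathlib

/-!
The sequence `s` satisfies the linear recurrence with characteristic polynomial `p`: the product
`t^n p(1/t) · Σ s_j t^j = t^(n-1) q(1/t)` has no coefficient of degree `≥ n`. Hence `C_pᵀ` shifts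
the Hankel matrix, `(C_pᵀ H)_{ij} = s_{i+j+1}`, which is symmetric. Both determinant identities
are instances of `det (X·N − M·N) = charpoly M · det N`, for `M = C_pᵀ` and for its conjugate
`K⁻¹ C_pᵀ K`, whose characteristic polynomial is `p`. Finally `Td = K⁻¹ (C_pᵀ H) K⁻ᵀ` is
symmetric, and as a product of lower triangular matrices and the lower Hessenberg matrix `C_pᵀ`
it vanishes above the superdiagonal, so by symmetry it is tridiagonal.
-/

open Polynomial Matrix BigOperators Finset

/-- The companion matrix over a field `k` of `p(x) = x^n + a_{n-1}x^{n-1} + ⋯ + a_0`: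
1's on the first subdiagonal, last column `(−a_0, …, −a_{n-1})ᵀ`, zeros elsewhere. -/
def companion (k : Type*) [Field k] (n : ℕ) (p : Polynomial k) :
    Matrix (Fin n) (Fin n) k :=
  Matrix.of fun i j =>
    if (j : ℕ) = n - 1 then -p.coeff (i : ℕ)
    else if (i : ℕ) = (j : ℕ) + 1 then 1
    else 0

/-- The coefficients `(s_j)` of the expansion `q(x)/p(x) = Σ_{j≥0} s_j·x^{−j−1}` at
infinity, over a field `k`. -/
noncomputable def hankelSeq (k : Type*) [Field k] (n : ℕ) (p q : Polynomial k) :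
    ℕ → k := fun j =>
  PowerSeries.coeff j
    (((Polynomial.reflect (n - 1) q : Polynomial k) : PowerSeries k) *
      ((Polynomial.reflect n p : Polynomial k) : PowerSeries k)⁻¹)

/-- The Hankel matrix `H_n(q/p) = (s_{i+j})_{0≤i,j≤n−1}` over `k`. -/
noncomputable def hankelMat (k : Type*) [Field k] (n : ℕ) (p q : Polynomial k) :
    Matrix (Fin n) (Fin n) k :=
  Matrix.of fun i j : Fin n => hankelSeq k n p q ((i : ℕ) + (j : ℕ))

namespace Matrix

variable {R : Type*} [CommRing R]

theorem charmatrix_submatrix {m l : Type*} [Fintype m] [DecidableEq m] [Fintype l]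
    [DecidableEq l] (M : Matrix m m R) {f : l → m} (hf : Function.Injective f) :
    (charmatrix M).submatrix f f = charmatrix (M.submatrix f f) := by
  ext i j
  simp [charmatrix_apply, diagonal_apply, hf.eq_iff]

theorem det_X_smul_map_sub_map_mul {m : Type*} [Fintype m] [DecidableEq m]
    (M N : Matrix m m R) :
    ((X : R[X]) • N.map C - (M * N).map C).det = M.charpoly * C N.det := by
  have h : (X : R[X]) • N.map C - (M * N).map C = charmatrix M * N.map C := by
    rw [charmatrix, sub_mul, RingHom.mapMatrix_apply, ← Matrix.map_mul, scalar_apply,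
      ← smul_eq_diagonal_mul]
  rw [h, det_mul, charpoly, RingHom.map_det, RingHom.mapMatrix_apply]

theorem IsSymm.mul_mul_transpose {m l : Type*} [Fintype m] {S : Matrix m m R} (hS : S.IsSymm)
    (A : Matrix l m R) : (A * S * Aᵀ).IsSymm := by
  rw [IsSymm, transpose_mul, transpose_mul, transpose_transpose, hS.eq, Matrix.mul_assoc]

def HasUpperBandwidth {n : ℕ} (M : Matrix (Fin n) (Fin n) R) (r : ℕ) : Prop :=
  ∀ i j : Fin n, (i : ℕ) + r < j → M i j = 0

theorem HasUpperBandwidth.mul {n r s : ℕ} {A B : Matrix (Fin n) (Fin n) R}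
    (hA : A.HasUpperBandwidth r) (hB : B.HasUpperBandwidth s) :
    (A * B).HasUpperBandwidth (r + s) := fun i j hij =>
  (mul_apply ..).trans <| sum_eq_zero fun l _ => by
    by_cases hl : (i : ℕ) + r < l
    · rw [hA i l hl, zero_mul]
    · rw [hB l j (by omega), mul_zero]

theorem IsLowerTriangular.hasUpperBandwidth_zero {n : ℕ} {M : Matrix (Fin n) (Fin n) R}
    (hM : M.IsLowerTriangular) : M.HasUpperBandwidth 0 :=
  fun i j hij => hM (OrderDual.toDual_lt_toDual.2 (Fin.lt_def.2 (by omega)))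

end Matrix

theorem Polynomial.coeff_coe_reflect_mul {R : Type*} [CommRing R] {p : R[X]} {n : ℕ}
    (hp : p.natDegree ≤ n) (S : PowerSeries R) (r : ℕ) :
    PowerSeries.coeff (n + r) ((reflect n p : PowerSeries R) * S) =
      ∑ l ∈ range (n + 1), p.coeff l * PowerSeries.coeff (r + l) S := by
  have hP : ∀ a, PowerSeries.coeff a (reflect n p : PowerSeries R) = p.coeff (revAt n a) :=
    fun a => by rw [coeff_coe, coeff_reflect]
  calc PowerSeries.coeff (n + r) ((reflect n p : PowerSeries R) * S)
      = ∑ a ∈ range (n + r + 1), p.coeff (revAt n a) * PowerSeries.coeff (n + r - a) S := by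
        rw [PowerSeries.coeff_mul, Nat.sum_antidiagonal_eq_sum_range_succ
          (fun a b => PowerSeries.coeff a (reflect n p : PowerSeries R) * PowerSeries.coeff b S)]
        simp only [hP]
    _ = ∑ a ∈ range (n + 1), p.coeff (n - a) * PowerSeries.coeff (r + (n - a)) S := by
        symm
        refine sum_subset_zero_on_sdiff (range_subset_range.2 (by omega)) ?_ ?_
        · intro a ha
          simp only [mem_sdiff, mem_range] at ha
          rw [revAt_eq_self_of_lt (by omega),
            coeff_eq_zero_of_natDegree_lt (by omega), zero_mul]
        · intro a ha
          rw [mem_range] at ha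
          rw [revAt_le (by omega), show n + r - a = r + (n - a) by omega]
    _ = ∑ l ∈ range (n + 1), p.coeff l * PowerSeries.coeff (r + l) S := by
        rw [← sum_range_reflect]
        refine sum_congr rfl fun a ha => ?_
        rw [Nat.add_sub_cancel, Nat.sub_sub_self (Nat.lt_succ_iff.1 (mem_range.1 ha))]

section Companion

variable {k : Type*} [Field k]

theorem companion_submatrix_succ (n : ℕ) (p : k[X]) :
    (companion k (n + 1) p).submatrix Fin.succ Fin.succ = companion k n p.divX := by
  ext i j
  simp only [companion, submatrix_apply, of_apply, Fin.val_succ, coeff_divX]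
  split_ifs <;> first | rfl | omega

theorem charmatrix_companion_apply_zero (n : ℕ) (p : k[X]) (j : Fin (n + 1)) :
    charmatrix (companion k (n + 1) p) 0 j =
      (if j = 0 then X else 0) + (if j = Fin.last n then C (p.coeff 0) else 0) := by
  rw [charmatrix_apply]
  simp only [companion, of_apply, diagonal_apply, Fin.val_zero, Fin.ext_iff, Fin.val_last]
  split_ifs <;> simp_all

theorem det_charmatrix_companion_submatrix_last (n : ℕ) (p : k[X]) :
    ((charmatrix (companion k (n + 1) p)).submatrix Fin.succ (Fin.last n).succAbove).det =
      (-1) ^ n := by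
  rw [Fin.succAbove_last]
  have htri : ((charmatrix (companion k (n + 1) p)).submatrix Fin.succ
      Fin.castSucc).IsUpperTriangular := by
    intro i j hij
    rw [id, id, Fin.lt_def] at hij
    rw [submatrix_apply, charmatrix_apply_ne _ _ _ (Fin.ext_iff.not.2 (by simp; omega))]
    simp only [companion, of_apply, Fin.val_succ, Fin.val_castSucc]
    rw [if_neg (by omega), if_neg (by omega), neg_eq_zero, map_zero]
  rw [det_of_isUpperTriangular htri]
  refine (prod_congr rfl fun i _ => ?_).trans
    (prod_const _ |>.trans (by rw [card_univ, Fintype.card_fin]))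
  rw [submatrix_apply, charmatrix_apply_ne _ _ _ (Fin.ext_iff.not.2 (by simp))]
  simp only [companion, of_apply, Fin.val_succ, Fin.val_castSucc]
  rw [if_neg (by omega), if_pos trivial, map_one]

theorem charpoly_companion (n : ℕ) (p : k[X]) :
    (companion k n p).charpoly = X ^ n + ∑ i ∈ range n, C (p.coeff i) * X ^ i := by
  induction n generalizing p with
  | zero => simp [charpoly_isEmpty]
  | succ n ih =>
    -- Laplace expansion along row 0: the minor at column 0 is the characteristic matrix of the
    -- companion matrix of `p.divX`, the minor at the last column is triangular.
    have minor_zero : ((charmatrix (companion k (n + 1) p)).submatrix Fin.succ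
        (0 : Fin (n + 1)).succAbove).det =
          X ^ n + ∑ i ∈ range n, C (p.coeff (i + 1)) * X ^ i := by
      rw [Fin.succAbove_zero, charmatrix_submatrix _ (Fin.succ_injective _),
        companion_submatrix_succ, ← charpoly, ih]
      simp only [coeff_divX]
    rw [charpoly, det_succ_row_zero]
    simp only [charmatrix_companion_apply_zero, add_mul, mul_add, sum_add_distrib, mul_ite,
      mul_zero, ite_mul, zero_mul, sum_ite_eq', mem_univ, if_true, minor_zero,
      det_charmatrix_companion_submatrix_last, Fin.val_zero, Fin.val_last, pow_zero, one_mul]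
    have hX : X * ∑ i ∈ range n, C (p.coeff (i + 1)) * X ^ i =
        ∑ i ∈ range n, C (p.coeff (i + 1)) * X ^ (i + 1) := by
      rw [mul_sum]
      exact sum_congr rfl fun i _ => by ring
    have hsign : (-1 : k[X]) ^ n * C (p.coeff 0) * (-1) ^ n = C (p.coeff 0) := by
      rw [mul_right_comm, ← mul_pow, neg_one_mul, neg_neg, one_pow, one_mul]
    rw [sum_range_succ', hX, hsign]
    ring

theorem charpoly_companion_of_monic {n : ℕ} {p : k[X]} (hp : p.Monic) (hd : p.natDegree = n) :
    (companion k n p).charpoly = p := by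
  rw [charpoly_companion, ← hd]
  exact hp.as_sum.symm

theorem hasUpperBandwidth_companion_transpose (n : ℕ) (p : k[X]) :
    (companion k n p)ᵀ.HasUpperBandwidth 1 := fun i j hij => by
  simp only [transpose_apply, companion, of_apply]
  rw [if_neg (by omega), if_neg (by omega)]

theorem companion_transpose_mul_hankel_apply {n : ℕ} {p : k[X]} (hpn : p.coeff n = 1)
    {s : ℕ → k} (hs : ∀ r, ∑ l ∈ range (n + 1), p.coeff l * s (r + l) = 0) (i j : Fin n) :
    ((companion k n p)ᵀ * of fun i j : Fin n => s (i + j)) i j = s (i + j + 1) := by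
  simp only [mul_apply, transpose_apply, companion, of_apply]
  by_cases hi : (i : ℕ) = n - 1
  · have hrec := hs j
    rw [sum_range_succ, hpn, one_mul,
      ← Fin.sum_univ_eq_sum_range (fun l => p.coeff l * s (j + l))] at hrec
    simp only [hi, if_true, neg_mul, sum_neg_distrib]
    rw [show n - 1 + j + 1 = j + n by omega, neg_eq_iff_add_eq_zero, ← hrec]
    simp only [add_comm]
  · have hlt : (i : ℕ) + 1 < n := by omega
    rw [sum_eq_single ⟨i + 1, hlt⟩
      (fun l _ hl => by rw [if_neg hi, if_neg (Fin.ext_iff.not.1 hl), zero_mul])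
      (fun h => absurd (mem_univ _) h)]
    simp only [hi, if_false, if_true, one_mul, add_right_comm]

theorem sum_coeff_mul_hankelSeq_eq_zero {n : ℕ} {p q : k[X]} (hp : p.Monic)
    (hpdeg : p.natDegree = n) (hq : q.natDegree < n) (r : ℕ) :
    ∑ l ∈ range (n + 1), p.coeff l * hankelSeq k n p q (r + l) = 0 := by
  set P : PowerSeries k := ((reflect n p : k[X]) : PowerSeries k)
  set Q : PowerSeries k := ((reflect (n - 1) q : k[X]) : PowerSeries k)
  have hP : PowerSeries.constantCoeff P ≠ 0 := by
    rw [← PowerSeries.coeff_zero_eq_constantCoeff_apply, coeff_coe, coeff_reflect, revAt_zero,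
      ← hpdeg, hp.coeff_natDegree]
    exact one_ne_zero
  have hPQ : P * (Q * P⁻¹) = Q := by rw [mul_left_comm, PowerSeries.mul_inv_cancel P hP, mul_one]
  change ∑ l ∈ range (n + 1), p.coeff l * PowerSeries.coeff (r + l) (Q * P⁻¹) = 0
  rw [← coeff_coe_reflect_mul hpdeg.le, hPQ, coeff_coe, coeff_reflect,
    revAt_eq_self_of_lt (by omega), coeff_eq_zero_of_natDegree_lt (by omega)]

end Companion

theorem stmt_16_general (k : Type*) [Field k] (n : ℕ) (p q : Polynomial k)
    (hp : p.Monic) (hpdeg : p.natDegree = n)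
    (hqdeg : q.natDegree = n - 1)
    (H : Matrix (Fin n) (Fin n) k) (hH : H = hankelMat k n p q) :
    ((companion k n p)ᵀ * H).IsSymm ∧
    Polynomial.C H.det * p =
      ((Polynomial.X : Polynomial k) • H.map (Polynomial.C : k →+* Polynomial k)
        - ((companion k n p)ᵀ * H).map (Polynomial.C : k →+* Polynomial k)).det ∧
    ∀ (K : Matrix (Fin n) (Fin n) k) (dv : Fin n → k),
      (∀ i j : Fin n, i < j → K i j = 0) → (∀ i : Fin n, K i i = 1) →
      H = K * Matrix.diagonal dv * Kᵀ →
      ((K⁻¹ * (companion k n p)ᵀ * K * Matrix.diagonal dv).IsSymm ∧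
        (∀ i j : Fin n, ((i : ℕ) + 2 ≤ (j : ℕ) ∨ (j : ℕ) + 2 ≤ (i : ℕ)) →
          (K⁻¹ * (companion k n p)ᵀ * K * Matrix.diagonal dv) i j = 0) ∧
        Polynomial.C (Matrix.diagonal dv).det * p =
          ((Polynomial.X : Polynomial k) •
              (Matrix.diagonal dv).map (Polynomial.C : k →+* Polynomial k)
            - (K⁻¹ * (companion k n p)ᵀ * K * Matrix.diagonal dv).map
                (Polynomial.C : k →+* Polynomial k)).det) := by
  subst hH
  have hCH (i j : Fin n) : ((companion k n p)ᵀ * hankelMat k n p q) i j =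
      hankelSeq k n p q (i + j + 1) :=
    companion_transpose_mul_hankel_apply (hpdeg ▸ hp.coeff_natDegree)
      (sum_coeff_mul_hankelSeq_eq_zero hp hpdeg (by have := i.isLt; omega)) i j
  have hsymm : ((companion k n p)ᵀ * hankelMat k n p q).IsSymm :=
    IsSymm.ext fun i j => by rw [hCH, hCH, add_comm (j : ℕ)]
  have hchar : (companion k n p)ᵀ.charpoly = p := by
    rw [charpoly_transpose, charpoly_companion_of_monic hp hpdeg]
  refine ⟨hsymm, by rw [det_X_smul_map_sub_map_mul, hchar, mul_comm],
    fun K d hKlow hKdiag hHK => ?_⟩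
  replace hKlow : K.IsLowerTriangular := fun i j hij => hKlow i j hij
  have hK : IsUnit K.det := by
    rw [det_of_isLowerTriangular K hKlow]
    simp [hKdiag]
  have hKinv : K⁻¹.IsLowerTriangular :=
    letI := invertibleOfIsUnitDet K hK
    blockTriangular_inv_of_blockTriangular hKlow
  have hTd : K⁻¹ * (companion k n p)ᵀ * K * diagonal d =
      K⁻¹ * ((companion k n p)ᵀ * hankelMat k n p q) * K⁻¹ᵀ := by
    rw [hHK]
    simp only [Matrix.mul_assoc, ← transpose_mul, nonsing_inv_mul K hK, transpose_one,
      Matrix.mul_one]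
  have hTsymm : (K⁻¹ * (companion k n p)ᵀ * K * diagonal d).IsSymm :=
    hTd ▸ hsymm.mul_mul_transpose K⁻¹
  have hband : (K⁻¹ * (companion k n p)ᵀ * K * diagonal d).HasUpperBandwidth 1 :=
    ((hKinv.hasUpperBandwidth_zero.mul (hasUpperBandwidth_companion_transpose n p)).mul
      hKlow.hasUpperBandwidth_zero).mul
      (IsLowerTriangular.hasUpperBandwidth_zero (blockTriangular_diagonal d))
  refine ⟨hTsymm, ?_, ?_⟩
  · rintro i j (hij | hij)
    · exact hband i j (by omega)
    · rw [← hTsymm.apply]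
      exact hband j i (by omega)
  · rw [det_X_smul_map_sub_map_mul, charpoly_mul_comm, ← mul_assoc, mul_nonsing_inv K hK,
      one_mul, hchar, mul_comm]

/-- Over any field `k`, for `p, q` monic of degrees `n, n−1` and `H = H_n(q/p)`:
(a) `C_pᵀ·H` is symmetric; (b) `det(H)·p(x) = det(x·H − C_pᵀ·H)`; (c) if `H = K·D·Kᵀ`
with `K` lower triangular with unit diagonal and `D` diagonal, then
`Td = K⁻¹·C_pᵀ·K·D` is symmetric and tridiagonal and `det(D)·p(x) = det(x·D − Td)`. -/
theorem stmt_16 (k : Type*) [Field k] (n : ℕ) (hn : 1 ≤ n) (p q : Polynomial k)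
    (hp : p.Monic) (hpdeg : p.natDegree = n)
    (hq : q.Monic) (hqdeg : q.natDegree = n - 1)
    (H : Matrix (Fin n) (Fin n) k) (hH : H = hankelMat k n p q) :
    ((companion k n p)ᵀ * H).IsSymm ∧
    Polynomial.C H.det * p =
      ((Polynomial.X : Polynomial k) • H.map (Polynomial.C : k →+* Polynomial k)
        - ((companion k n p)ᵀ * H).map (Polynomial.C : k →+* Polynomial k)).det ∧
    ∀ (K : Matrix (Fin n) (Fin n) k) (dv : Fin n → k),
      (∀ i j : Fin n, i < j → K i j = 0) → (∀ i : Fin n, K i i = 1) →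
      H = K * Matrix.diagonal dv * Kᵀ →
      ((K⁻¹ * (companion k n p)ᵀ * K * Matrix.diagonal dv).IsSymm ∧
        (∀ i j : Fin n, ((i : ℕ) + 2 ≤ (j : ℕ) ∨ (j : ℕ) + 2 ≤ (i : ℕ)) →
          (K⁻¹ * (companion k n p)ᵀ * K * Matrix.diagonal dv) i j = 0) ∧
        Polynomial.C (Matrix.diagonal dv).det * p =
          ((Polynomial.X : Polynomial k) •
              (Matrix.diagonal dv).map (Polynomial.C : k →+* Polynomial k)
            - (K⁻¹ * (companion k n p)ᵀ * K * Matrix.diagonal dv).map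
                (Polynomial.C : k →+* Polynomial k)).det) :=
  stmt_16_general k n p q hp hpdeg hqdeg H hH
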